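/- Suppose the sequence (x^k, λ^k) is generated by P-ALM, i.e., x^{k+1} ∈ X minimizes x ↦ θ(x) − ⟨λ^k, Ax − b⟩ + (r/2)‖A(x − x^k)‖² + (1/2)⟨x − x^k, Q(x − x^k)⟩ over X and λ^{k+1} = λ^k − r(A(2x^{k+1} − x^k) − b). Let x* ∈ X with Ax* = b be an optimal solution, i.e., (x*, λ*) ∈ M* for some λ*. Fix η > 0 and integers T > 0, κ ≥ 0, and set γ_η = sup{‖(x*, λ) − w^κ‖²_H : λ ∈ ℝᵐ, ‖λ‖ ≤ η}. Then the ergodic average x_T = (1/(T+1)) ∑_{k=κ}^{κ+T} x^{k+1} satisfies θ(x_T) − θ(x*) + η‖A x_T − b‖ ≤ γ_η / (2(T+1)). -/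

import Mathlib

open Matrix Finset

noncomputable section

/-- The bilinear form `(w₁, w₂) ↦ ⟨w₁, H w₂⟩` of the P-ALM matrix
`H = [[rAᵀA + Q, Aᵀ], [A, (1/r)I]]` on `ℝⁿ × ℝᵐ`. -/
def Hbil {n m : ℕ} (A : Matrix (Fin m) (Fin n) ℝ) (Q : Matrix (Fin n) (Fin n) ℝ) (r : ℝ)
    (w₁ w₂ : (Fin n → ℝ) × (Fin m → ℝ)) : ℝ :=
  w₁.1 ⬝ᵥ ((r • (Aᵀ * A) + Q) *ᵥ w₂.1) + w₁.1 ⬝ᵥ (Aᵀ *ᵥ w₂.2) + w₁.2 ⬝ᵥ (A *ᵥ w₂.1)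
    + 1 / r * (w₁.2 ⬝ᵥ w₂.2)

/-- The squared `H`-weighted norm `‖w‖²_H = ⟨w, Hw⟩`. -/
def HnormSq {n m : ℕ} (A : Matrix (Fin m) (Fin n) ℝ) (Q : Matrix (Fin n) (Fin n) ℝ) (r : ℝ)
    (w : (Fin n → ℝ) × (Fin m → ℝ)) : ℝ := Hbil A Q r w w

/-- The affine map `J(x, λ) = (−Aᵀλ, Ax − b)`. -/
def Jmap {n m : ℕ} (A : Matrix (Fin m) (Fin n) ℝ) (b : Fin m → ℝ)
    (w : (Fin n → ℝ) × (Fin m → ℝ)) : (Fin n → ℝ) × (Fin m → ℝ) :=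
  (-(Aᵀ *ᵥ w.2), A *ᵥ w.1 - b)

/-- The Euclidean inner product on `ℝⁿ × ℝᵐ`. -/
def pdot {n m : ℕ} (w₁ w₂ : (Fin n → ℝ) × (Fin m → ℝ)) : ℝ := w₁.1 ⬝ᵥ w₂.1 + w₁.2 ⬝ᵥ w₂.2

/-- `w* = (x*, λ*)` belongs to the solution set `M*` of `VI(θ, J, M)`, `M = X × ℝᵐ`:
`w*.1 ∈ X` and `θ(x) − θ(x*) + ⟨w − w*, J(w*)⟩ ≥ 0` for all `w ∈ M`. -/
def SolPoint {n m : ℕ} (θ : (Fin n → ℝ) → ℝ) (X : Set (Fin n → ℝ))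
    (A : Matrix (Fin m) (Fin n) ℝ) (b : Fin m → ℝ) (ws : (Fin n → ℝ) × (Fin m → ℝ)) : Prop :=
  ws.1 ∈ X ∧ ∀ w : (Fin n → ℝ) × (Fin m → ℝ), w.1 ∈ X →
    θ w.1 - θ ws.1 + pdot (w - ws) (Jmap A b ws) ≥ 0

/-- The P-ALM iteration: `x^{k+1} ∈ X` minimizes
`x ↦ θ(x) − ⟨λᵏ, Ax − b⟩ + (r/2)‖A(x − xᵏ)‖² + (1/2)⟨x − xᵏ, Q(x − xᵏ)⟩` over `X`, and
`λ^{k+1} = λᵏ − r(A(2x^{k+1} − xᵏ) − b)`. -/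
def PALM {n m : ℕ} (θ : (Fin n → ℝ) → ℝ) (X : Set (Fin n → ℝ))
    (A : Matrix (Fin m) (Fin n) ℝ) (b : Fin m → ℝ) (r : ℝ) (Q : Matrix (Fin n) (Fin n) ℝ)
    (x : ℕ → Fin n → ℝ) (lam : ℕ → Fin m → ℝ) : Prop :=
  (∀ k : ℕ, x (k + 1) ∈ X ∧ ∀ z ∈ X,
      θ (x (k + 1)) - lam k ⬝ᵥ (A *ᵥ x (k + 1) - b)
          + r / 2 * ((A *ᵥ (x (k + 1) - x k)) ⬝ᵥ (A *ᵥ (x (k + 1) - x k)))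
          + 1 / 2 * ((x (k + 1) - x k) ⬝ᵥ (Q *ᵥ (x (k + 1) - x k)))
        ≤ θ z - lam k ⬝ᵥ (A *ᵥ z - b)
          + r / 2 * ((A *ᵥ (z - x k)) ⬝ᵥ (A *ᵥ (z - x k)))
          + 1 / 2 * ((z - x k) ⬝ᵥ (Q *ᵥ (z - x k)))) ∧
  (∀ k : ℕ, lam (k + 1) = lam k - r • (A *ᵥ ((2 : ℝ) • x (k + 1) - x k) - b))

/-!
P-ALM is a proximal point method for the variational inequality `VI(θ, J, M)` in the metric
`H`: the optimality condition of the `x`-subproblem together with the multiplier update reads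
`θ(x) − θ(xᵏ⁺¹) + ⟨w − wᵏ⁺¹, J(wᵏ⁺¹)⟩ ≥ ⟨w − wᵏ⁺¹, H(wᵏ − wᵏ⁺¹)⟩` for `x ∈ X`.
As `J` is affine with skew-symmetric linear part, `J(wᵏ⁺¹)` may be replaced by `J(w)`, and the
three-point identity for `H` bounds the right-hand side below by
`½(‖w − wᵏ⁺¹‖²_H − ‖w − wᵏ‖²_H)`. Summing from `κ` to `κ + T` telescopes, Jensen's inequality
moves `θ` onto the ergodic average, and for `w = (x*, λ)` the coupling term is
`⟨λ, A x_T − b⟩`; the choice `λ = −η (A x_T − b) / ‖A x_T − b‖` turns it into `η ‖A x_T − b‖`.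
-/

section HForm

variable {n m : ℕ} (A : Matrix (Fin m) (Fin n) ℝ) {Q : Matrix (Fin n) (Fin n) ℝ} {r : ℝ}

lemma Matrix.IsSymm.dotProduct_mulVec_comm {ι R : Type*} [Fintype ι] [CommSemiring R]
    {P : Matrix ι ι R} (hP : P.IsSymm) (x y : ι → R) : x ⬝ᵥ (P *ᵥ y) = y ⬝ᵥ (P *ᵥ x) := by
  simpa only [hP.eq] using dotProduct_transpose_mulVec P x y

lemma dotProduct_smul_transpose_mul_add_mulVec (x y : Fin n → ℝ) :
    x ⬝ᵥ ((r • (Aᵀ * A) + Q) *ᵥ y) = r * ((A *ᵥ x) ⬝ᵥ (A *ᵥ y)) + x ⬝ᵥ (Q *ᵥ y) := by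
  rw [add_mulVec, dotProduct_add, smul_mulVec, dotProduct_smul, ← mulVec_mulVec,
    dotProduct_transpose_mulVec, dotProduct_comm, smul_eq_mul]

lemma Hbil_eq (w₁ w₂ : (Fin n → ℝ) × (Fin m → ℝ)) :
    Hbil A Q r w₁ w₂ = r * ((A *ᵥ w₁.1) ⬝ᵥ (A *ᵥ w₂.1)) + w₁.1 ⬝ᵥ (Q *ᵥ w₂.1)
      + w₂.2 ⬝ᵥ (A *ᵥ w₁.1) + w₁.2 ⬝ᵥ (A *ᵥ w₂.1) + 1 / r * (w₁.2 ⬝ᵥ w₂.2) := by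
  rw [Hbil, dotProduct_smul_transpose_mul_add_mulVec, dotProduct_transpose_mulVec]

lemma Hbil_comm (hQ : Q.IsSymm) (w₁ w₂ : (Fin n → ℝ) × (Fin m → ℝ)) :
    Hbil A Q r w₁ w₂ = Hbil A Q r w₂ w₁ := by
  rw [Hbil_eq, Hbil_eq, hQ.dotProduct_mulVec_comm, dotProduct_comm (A *ᵥ w₁.1),
    dotProduct_comm w₁.2 w₂.2]
  ring

lemma Hbil_sub_left (w w' u : (Fin n → ℝ) × (Fin m → ℝ)) :
    Hbil A Q r (w - w') u = Hbil A Q r w u - Hbil A Q r w' u := by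
  simp only [Hbil_eq, Prod.fst_sub, Prod.snd_sub, mulVec_sub, sub_dotProduct, dotProduct_sub]
  ring

lemma Hbil_sub_right (w u u' : (Fin n → ℝ) × (Fin m → ℝ)) :
    Hbil A Q r w (u - u') = Hbil A Q r w u - Hbil A Q r w u' := by
  simp only [Hbil_eq, Prod.fst_sub, Prod.snd_sub, mulVec_sub, sub_dotProduct, dotProduct_sub]
  ring

lemma two_mul_Hbil_sub_sub (hQ : Q.IsSymm) (w u v : (Fin n → ℝ) × (Fin m → ℝ)) :
    2 * Hbil A Q r (w - v) (u - v)
      = HnormSq A Q r (w - v) - HnormSq A Q r (w - u) + HnormSq A Q r (u - v) := by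
  simp only [HnormSq, Hbil_sub_left, Hbil_sub_right]
  rw [Hbil_comm A hQ u w, Hbil_comm A hQ v w, Hbil_comm A hQ v u]
  ring

lemma HnormSq_nonneg (hr : 0 < r) (hQ : Q.PosSemidef) (w : (Fin n → ℝ) × (Fin m → ℝ)) :
    0 ≤ HnormSq A Q r w := by
  set v := r • (A *ᵥ w.1) + w.2
  have hsq : HnormSq A Q r w = 1 / r * (v ⬝ᵥ v) + w.1 ⬝ᵥ (Q *ᵥ w.1) := by
    simp only [HnormSq, Hbil_eq, v, dotProduct_add, add_dotProduct, dotProduct_smul,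
      smul_dotProduct, smul_eq_mul, dotProduct_comm w.2 (A *ᵥ w.1)]
    field_simp
    ring
  have hv : 0 ≤ v ⬝ᵥ v := Fintype.sum_nonneg fun i => mul_self_nonneg (v i)
  have hQw : 0 ≤ w.1 ⬝ᵥ (Q *ᵥ w.1) := by simpa using hQ.dotProduct_mulVec_nonneg w.1
  rw [hsq]
  positivity

end HForm

open Filter Topology in
lemma nonneg_of_forall_add_mul_nonneg {a c : ℝ} (h : ∀ t : ℝ, 0 < t → t ≤ 1 → 0 ≤ a + t * c) :
    0 ≤ a := by
  have hlim : Tendsto (fun t : ℝ => a + t * c) (𝓝[>] 0) (𝓝 a) := by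
    have hcont : Continuous fun t : ℝ => a + t * c := by fun_prop
    simpa using (hcont.tendsto 0).mono_left nhdsWithin_le_nhds
  refine ge_of_tendsto hlim ?_
  filter_upwards [Ioc_mem_nhdsGT one_pos] with t ht using h t ht.1 ht.2

lemma ConvexOn.sub_add_dotProduct_nonneg_of_isMinOn {n : ℕ} {θ : (Fin n → ℝ) → ℝ}
    {X : Set (Fin n → ℝ)} (hθ : ConvexOn ℝ X θ) {P : Matrix (Fin n) (Fin n) ℝ} (hP : P.IsSymm)
    {g x₀ xp : Fin n → ℝ} (hxp : xp ∈ X)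
    (hmin : IsMinOn (fun z => θ z + g ⬝ᵥ z + 1 / 2 * ((z - x₀) ⬝ᵥ (P *ᵥ (z - x₀)))) X xp)
    {z : Fin n → ℝ} (hz : z ∈ X) :
    0 ≤ θ z - θ xp + (z - xp) ⬝ᵥ (g + P *ᵥ (xp - x₀)) := by
  set d := z - xp
  set u := xp - x₀
  refine nonneg_of_forall_add_mul_nonneg (c := 1 / 2 * (d ⬝ᵥ (P *ᵥ d))) fun t ht₀ ht₁ => ?_
  have hθt : θ (xp + t • d) ≤ θ xp + t * (θ z - θ xp) := by
    have h := hθ.2 hxp hz (sub_nonneg.2 ht₁) ht₀.le (sub_add_cancel 1 t)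
    rw [show (1 - t) • xp + t • z = xp + t • d by simp only [d]; module] at h
    simp only [smul_eq_mul] at h
    linarith
  have hquad : (xp + t • d - x₀) ⬝ᵥ (P *ᵥ (xp + t • d - x₀))
      = u ⬝ᵥ (P *ᵥ u) + 2 * t * (d ⬝ᵥ (P *ᵥ u)) + t ^ 2 * (d ⬝ᵥ (P *ᵥ d)) := by
    rw [show xp + t • d - x₀ = u + t • d by simp only [u]; abel]
    simp only [mulVec_add, mulVec_smul, dotProduct_add, add_dotProduct, dotProduct_smul,
      smul_dotProduct, smul_eq_mul, hP.dotProduct_mulVec_comm u d]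
    ring
  have hstep : θ xp + g ⬝ᵥ xp + 1 / 2 * (u ⬝ᵥ (P *ᵥ u))
      ≤ θ (xp + t • d) + g ⬝ᵥ (xp + t • d)
        + 1 / 2 * ((xp + t • d - x₀) ⬝ᵥ (P *ᵥ (xp + t • d - x₀))) :=
    hmin (hθ.1.add_smul_sub_mem hxp hz ⟨ht₀.le, ht₁⟩)
  rw [hquad, dotProduct_add, dotProduct_smul, smul_eq_mul] at hstep
  have hscaled : 0 ≤ t * (θ z - θ xp + d ⬝ᵥ (g + P *ᵥ u) + t * (1 / 2 * (d ⬝ᵥ (P *ᵥ d)))) := by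
    rw [dotProduct_add, dotProduct_comm d g]
    nlinarith
  exact nonneg_of_mul_nonneg_right hscaled ht₀

lemma ConvexOn.map_inv_card_smul_sum_le {E ι : Type*} [AddCommGroup E] [Module ℝ E]
    {s : Set E} {f : E → ℝ} (hf : ConvexOn ℝ s f) {t : Finset ι} (ht : t.Nonempty)
    {p : ι → E} (hp : ∀ i ∈ t, p i ∈ s) :
    f ((#t : ℝ)⁻¹ • ∑ i ∈ t, p i) ≤ (#t : ℝ)⁻¹ * ∑ i ∈ t, f (p i) := by
  simpa only [smul_sum, mul_sum, smul_eq_mul] using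
    hf.map_sum_le (fun _ _ => by positivity) (by simp [ht.card_ne_zero]) hp

lemma pdot_sub_Jmap_comm {n m : ℕ} (A : Matrix (Fin m) (Fin n) ℝ) (b : Fin m → ℝ)
    (w w' : (Fin n → ℝ) × (Fin m → ℝ)) :
    pdot (w - w') (Jmap A b w') = pdot (w - w') (Jmap A b w) := by
  simp only [pdot, Jmap, Prod.fst_sub, Prod.snd_sub, dotProduct_neg, dotProduct_sub,
    sub_dotProduct, mulVec_sub, dotProduct_transpose_mulVec]
  rw [dotProduct_comm w.2 (A *ᵥ w.1), dotProduct_comm w.2 (A *ᵥ w'.1),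
    dotProduct_comm w'.2 (A *ᵥ w.1), dotProduct_comm w'.2 (A *ᵥ w'.1)]
  ring

lemma pdot_sub_Jmap_of_mulVec_eq {n m : ℕ} {A : Matrix (Fin m) (Fin n) ℝ} {b : Fin m → ℝ}
    {xs : Fin n → ℝ} (hxs : A *ᵥ xs = b) (l : Fin m → ℝ) (w : (Fin n → ℝ) × (Fin m → ℝ)) :
    pdot ((xs, l) - w) (Jmap A b (xs, l)) = (A *ᵥ w.1 - b) ⬝ᵥ l := by
  simp only [pdot, Jmap, Prod.fst_sub, Prod.snd_sub, hxs, sub_self, dotProduct_zero, add_zero,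
    dotProduct_neg, dotProduct_transpose_mulVec, dotProduct_comm l, mulVec_sub, sub_dotProduct]
  ring

namespace PALM

variable {n m : ℕ} {θ : (Fin n → ℝ) → ℝ} {X : Set (Fin n → ℝ)} {A : Matrix (Fin m) (Fin n) ℝ}
  {b : Fin m → ℝ} {r : ℝ} {Q : Matrix (Fin n) (Fin n) ℝ} {x : ℕ → Fin n → ℝ}
  {lam : ℕ → Fin m → ℝ}

lemma isMinOn (h : PALM θ X A b r Q x lam) (k : ℕ) :
    IsMinOn (fun z => θ z + (-(Aᵀ *ᵥ lam k)) ⬝ᵥ z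
      + 1 / 2 * ((z - x k) ⬝ᵥ ((r • (Aᵀ * A) + Q) *ᵥ (z - x k)))) X (x (k + 1)) := by
  have hobj : ∀ z, -(lam k ⬝ᵥ (A *ᵥ z - b)) + r / 2 * ((A *ᵥ (z - x k)) ⬝ᵥ (A *ᵥ (z - x k)))
      + 1 / 2 * ((z - x k) ⬝ᵥ (Q *ᵥ (z - x k)))
      = (-(Aᵀ *ᵥ lam k)) ⬝ᵥ z + 1 / 2 * ((z - x k) ⬝ᵥ ((r • (Aᵀ * A) + Q) *ᵥ (z - x k)))
        + lam k ⬝ᵥ b := by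
    intro z
    rw [dotProduct_smul_transpose_mul_add_mulVec, neg_dotProduct, dotProduct_comm _ z,
      dotProduct_transpose_mulVec, dotProduct_sub]
    ring
  intro z hz
  have hle := (h.1 k).2 z hz
  have hz_obj := hobj z
  have hnext_obj := hobj (x (k + 1))
  simp only [Set.mem_ofPred_eq]
  linarith

lemma Hbil_le (h : PALM θ X A b r Q x lam) (hθ : ConvexOn ℝ X θ) (hr : r ≠ 0) (hQ : Q.IsSymm)
    (k : ℕ) (w : (Fin n → ℝ) × (Fin m → ℝ)) (hw : w.1 ∈ X) :
    Hbil A Q r (w - (x (k + 1), lam (k + 1))) ((x k, lam k) - (x (k + 1), lam (k + 1)))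
      ≤ θ w.1 - θ (x (k + 1)) + pdot (w - (x (k + 1), lam (k + 1)))
        (Jmap A b (x (k + 1), lam (k + 1))) := by
  have hP : (r • (Aᵀ * A) + Q).IsSymm := by
    simp only [IsSymm, transpose_add, transpose_smul, transpose_mul, transpose_transpose, hQ.eq]
  have hvi := hθ.sub_add_dotProduct_nonneg_of_isMinOn (g := -(Aᵀ *ᵥ lam k)) (x₀ := x k) hP
    (h.1 k).1 (h.isMinOn k) hw
  -- `λᵏ − λᵏ⁺¹ = r (A(2xᵏ⁺¹ − xᵏ) − b)` makes the `λ`-rows of `H` cancel the `λ`-part of `J`.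
  suffices hgap : pdot (w - (x (k + 1), lam (k + 1))) (Jmap A b (x (k + 1), lam (k + 1)))
      - Hbil A Q r (w - (x (k + 1), lam (k + 1))) ((x k, lam k) - (x (k + 1), lam (k + 1)))
      = (w.1 - x (k + 1)) ⬝ᵥ (-(Aᵀ *ᵥ lam k) + (r • (Aᵀ * A) + Q) *ᵥ (x (k + 1) - x k)) by
    linarith
  rw [h.2 k]
  simp only [pdot, Jmap, Hbil_eq, Prod.fst_sub, Prod.snd_sub, dotProduct_neg,
    dotProduct_add, dotProduct_sub, sub_dotProduct, mulVec_sub, mulVec_smul, dotProduct_smul,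
    smul_dotProduct, smul_eq_mul, dotProduct_transpose_mulVec,
    dotProduct_smul_transpose_mul_add_mulVec]
  simp only [dotProduct_comm]
  field_simp
  ring

lemma half_HnormSq_sub_le (h : PALM θ X A b r Q x lam) (hθ : ConvexOn ℝ X θ) (hr : 0 < r)
    (hQ : Q.PosSemidef) (k : ℕ) (w : (Fin n → ℝ) × (Fin m → ℝ)) (hw : w.1 ∈ X) :
    1 / 2 * (HnormSq A Q r (w - (x (k + 1), lam (k + 1))) - HnormSq A Q r (w - (x k, lam k)))
      ≤ θ w.1 - θ (x (k + 1)) + pdot (w - (x (k + 1), lam (k + 1))) (Jmap A b w) := by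
  have hQs : Q.IsSymm := isHermitian_iff_isSymm.mp hQ.1
  have hvi := h.Hbil_le hθ hr.ne' hQs k w hw
  have hthree := two_mul_Hbil_sub_sub A (r := r) hQs w (x k, lam k) (x (k + 1), lam (k + 1))
  have hstep := HnormSq_nonneg A hr hQ ((x k, lam k) - (x (k + 1), lam (k + 1)))
  rw [← pdot_sub_Jmap_comm]
  linarith

lemma ergodic_bound (h : PALM θ X A b r Q x lam) (hθ : ConvexOn ℝ X θ) (hr : 0 < r)
    (hQ : Q.PosSemidef) {xs : Fin n → ℝ} (hxsX : xs ∈ X) (hxs : A *ᵥ xs = b) (l : Fin m → ℝ)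
    (κ T : ℕ) {xT : Fin n → ℝ} (hxT : xT = ((T : ℝ) + 1)⁻¹ • ∑ k ∈ range (T + 1), x (κ + k + 1)) :
    ((T : ℝ) + 1) * (θ xT - θ xs - (A *ᵥ xT - b) ⬝ᵥ l)
      ≤ 1 / 2 * HnormSq A Q r ((xs, l) - (x κ, lam κ)) := by
  have hsum : 1 / 2 * (HnormSq A Q r ((xs, l) - (x (κ + T + 1), lam (κ + T + 1)))
        - HnormSq A Q r ((xs, l) - (x κ, lam κ)))
      ≤ ∑ j ∈ range (T + 1), (θ xs - θ (x (κ + j + 1)) + (A *ᵥ x (κ + j + 1) - b) ⬝ᵥ l) := by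
    have htel : ∑ j ∈ range (T + 1),
          (HnormSq A Q r ((xs, l) - (x (κ + j + 1), lam (κ + j + 1)))
            - HnormSq A Q r ((xs, l) - (x (κ + j), lam (κ + j))))
        = HnormSq A Q r ((xs, l) - (x (κ + T + 1), lam (κ + T + 1)))
          - HnormSq A Q r ((xs, l) - (x κ, lam κ)) :=
      sum_range_sub (fun j => HnormSq A Q r ((xs, l) - (x (κ + j), lam (κ + j)))) (T + 1)
    rw [← htel, mul_sum]
    refine sum_le_sum fun j _ => ?_
    have hstep := h.half_HnormSq_sub_le hθ hr hQ (κ + j) (xs, l) hxsX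
    rwa [pdot_sub_Jmap_of_mulVec_eq hxs] at hstep
  have hcard : ((#(range (T + 1)) : ℕ) : ℝ) = T + 1 := by simp
  have hjensen : θ xT ≤ ((T : ℝ) + 1)⁻¹ * ∑ j ∈ range (T + 1), θ (x (κ + j + 1)) := by
    simpa only [hcard, ← hxT] using
      hθ.map_inv_card_smul_sum_le (nonempty_range_add_one (n := T)) fun j _ => (h.1 (κ + j)).1
  have haverage : ∑ j ∈ range (T + 1), (A *ᵥ x (κ + j + 1) - b) ⬝ᵥ l
      = ((T : ℝ) + 1) * ((A *ᵥ xT - b) ⬝ᵥ l) := by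
    simp only [hxT, mulVec_smul, mulVec_sum, sub_dotProduct, smul_dotProduct, sum_dotProduct,
      sum_sub_distrib, sum_const, card_range, nsmul_eq_mul, smul_eq_mul]
    push_cast
    field_simp
  have hlast := HnormSq_nonneg A hr hQ ((xs, l) - (x (κ + T + 1), lam (κ + T + 1)))
  rw [sum_add_distrib, sum_sub_distrib, sum_const, card_range, nsmul_eq_mul, haverage] at hsum
  rw [le_inv_mul_iff₀ (by positivity)] at hjensen
  push_cast at hsum
  nlinarith

end PALM

lemma add_mul_sqrt_dotProduct_self_le {m : ℕ} {a C η : ℝ} (hη : 0 ≤ η) (S : Fin m → ℝ)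
    (h : ∀ l : Fin m → ℝ, √(l ⬝ᵥ l) ≤ η → a - S ⬝ᵥ l ≤ C) :
    a + η * √(S ⬝ᵥ S) ≤ C := by
  rcases (Real.sqrt_nonneg (S ⬝ᵥ S)).eq_or_lt with hs | hs
  · simpa [← hs] using h 0 (by simpa using hη)
  set s := √(S ⬝ᵥ S)
  have hSS : S ⬝ᵥ S = s ^ 2 :=
    (Real.sq_sqrt (Fintype.sum_nonneg fun i => mul_self_nonneg (S i))).symm
  have hnorm : (-(η / s) • S) ⬝ᵥ (-(η / s) • S) = η ^ 2 := by
    rw [smul_dotProduct, dotProduct_smul, hSS, smul_eq_mul, smul_eq_mul]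
    field_simp
  have hpair : S ⬝ᵥ (-(η / s) • S) = -(η * s) := by
    rw [dotProduct_smul, hSS, smul_eq_mul]
    field_simp
  have hl := h (-(η / s) • S) (by rw [hnorm, Real.sqrt_sq hη])
  rwa [hpair, sub_neg_eq_add] at hl

lemma le_sSup_of_sqrt_dotProduct_self_le {m : ℕ} {f : (Fin m → ℝ) → ℝ} (hf : Continuous f)
    {η : ℝ} {l : Fin m → ℝ} (hl : √(l ⬝ᵥ l) ≤ η) :
    f l ≤ sSup {c : ℝ | ∃ l' : Fin m → ℝ, √(l' ⬝ᵥ l') ≤ η ∧ c = f l'} := by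
  have hball : {l' : Fin m → ℝ | √(l' ⬝ᵥ l') ≤ η} ⊆ Metric.closedBall 0 η := by
    intro l' hl'
    rw [mem_closedBall_zero_iff, pi_norm_le_iff_of_nonneg ((Real.sqrt_nonneg _).trans hl')]
    intro i
    rw [Real.norm_eq_abs]
    refine (Real.abs_le_sqrt ?_).trans hl'
    rw [sq]
    exact single_le_sum (f := fun j => l' j * l' j) (fun j _ => mul_self_nonneg (l' j))
      (mem_univ i)
  obtain ⟨M, hM⟩ := (isCompact_closedBall (0 : Fin m → ℝ) η).bddAbove_image hf.continuousOn
  refine le_csSup ⟨M, ?_⟩ ⟨l, hl, rfl⟩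
  rintro _ ⟨l', hl', rfl⟩
  exact hM ⟨l', hball hl', rfl⟩

theorem stmt_12_general (n m : ℕ) (θ : (Fin n → ℝ) → ℝ) (hθ : ConvexOn ℝ Set.univ θ)
    (X : Set (Fin n → ℝ)) (hXconvex : Convex ℝ X)
    (A : Matrix (Fin m) (Fin n) ℝ) (b : Fin m → ℝ) (r : ℝ) (hr : 0 < r)
    (Q : Matrix (Fin n) (Fin n) ℝ) (hQ : Q.PosDef)
    (x : ℕ → Fin n → ℝ) (lam : ℕ → Fin m → ℝ) (halg : PALM θ X A b r Q x lam)
    (xs : Fin n → ℝ) (hxsX : xs ∈ X) (hxsfeas : A *ᵥ xs = b)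
    (η : ℝ) (hη : 0 < η) (T : ℕ) (κ : ℕ)
    (γ : ℝ)
    (hγ : γ = sSup {c : ℝ | ∃ lam' : Fin m → ℝ, Real.sqrt (lam' ⬝ᵥ lam') ≤ η ∧
      c = HnormSq A Q r ((xs, lam') - (x κ, lam κ))})
    (xT : Fin n → ℝ) (hxT : xT = ((T : ℝ) + 1)⁻¹ • ∑ k ∈ Finset.range (T + 1), x (κ + k + 1)) :
    θ xT - θ xs + η * Real.sqrt ((A *ᵥ xT - b) ⬝ᵥ (A *ᵥ xT - b)) ≤
      γ / (2 * ((T : ℝ) + 1)) := by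
  have hcont : Continuous fun l : Fin m → ℝ => HnormSq A Q r ((xs, l) - (x κ, lam κ)) := by
    simp only [HnormSq, Hbil, Prod.mk_sub_mk, mulVec, dotProduct]
    fun_prop
  refine add_mul_sqrt_dotProduct_self_le hη.le _ fun l hl => ?_
  have hbound := halg.ergodic_bound (hθ.subset (Set.subset_univ X) hXconvex) hr hQ.posSemidef
    hxsX hxsfeas l κ T hxT
  have hγl : HnormSq A Q r ((xs, l) - (x κ, lam κ)) ≤ γ :=
    hγ ▸ le_sSup_of_sqrt_dotProduct_self_le hcont hl
  rw [le_div_iff₀ (by positivity)]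
  linarith

/-- Corollary 2.6, ergodic bound on objective gap plus feasibility. -/
theorem stmt_12 (n m : ℕ) (θ : (Fin n → ℝ) → ℝ) (hθ : ConvexOn ℝ Set.univ θ)
    (X : Set (Fin n → ℝ)) (hXne : X.Nonempty) (hXclosed : IsClosed X) (hXconvex : Convex ℝ X)
    (A : Matrix (Fin m) (Fin n) ℝ) (b : Fin m → ℝ) (r : ℝ) (hr : 0 < r)
    (Q : Matrix (Fin n) (Fin n) ℝ) (hQ : Q.PosDef)
    (x : ℕ → Fin n → ℝ) (lam : ℕ → Fin m → ℝ) (halg : PALM θ X A b r Q x lam)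
    (xs : Fin n → ℝ) (hxsX : xs ∈ X) (hxsfeas : A *ᵥ xs = b)
    (hxsopt : ∃ lams : Fin m → ℝ, SolPoint θ X A b (xs, lams))
    (η : ℝ) (hη : 0 < η) (T : ℕ) (hT : 0 < T) (κ : ℕ)
    (γ : ℝ)
    (hγ : γ = sSup {c : ℝ | ∃ lam' : Fin m → ℝ, Real.sqrt (lam' ⬝ᵥ lam') ≤ η ∧
      c = HnormSq A Q r ((xs, lam') - (x κ, lam κ))})
    (xT : Fin n → ℝ) (hxT : xT = ((T : ℝ) + 1)⁻¹ • ∑ k ∈ Finset.range (T + 1), x (κ + k + 1)) :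
    θ xT - θ xs + η * Real.sqrt ((A *ᵥ xT - b) ⬝ᵥ (A *ᵥ xT - b)) ≤
      γ / (2 * ((T : ℝ) + 1)) :=
  stmt_12_general n m θ hθ X hXconvex A b r hr Q hQ x lam halg xs hxsX hxsfeas η hη T κ γ hγ xT hxT
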